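/- Let d ≥ 2, 0 < r < R, and 0 ≤ t < R − r. Set Ω_t = B_R(0) \ cl(B_r(t e₁)). Let H_a = {x = (x₁,x′) ∈ ℝ^d : x₁ < a} and P_a = P_{H_a}. Then P_a(Ω_t) = Ω_t for 0 ≤ a ≤ t, and P_a(Ω_t) = Ω_{2a−t} for t ≤ a < (R − r + t)/2. -/

import Mathlib

open MeasureTheory Metric Set ENNReal

noncomputable section

/-- `d`-dimensional Euclidean space. -/
abbrev Euc (d : ℕ) : Type := EuclideanSpace ℝ (Fin d)

/-- The open affine half-space (polarizer) `{x : ⟪x, h⟫ < a}`. -/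
def halfSpace {d : ℕ} (h : Euc d) (a : ℝ) : Set (Euc d) :=
  {x : Euc d | (inner ℝ x h : ℝ) < a}

/-- Reflection across the affine hyperplane `{x : ⟪x, h⟫ = a}`:
`σ_H x = x - 2(⟪x,h⟫ - a) h`. -/
def reflH {d : ℕ} (h : Euc d) (a : ℝ) (x : Euc d) : Euc d :=
  x - (2 * ((inner ℝ x h : ℝ) - a)) • h

/-- Polarization of a set with respect to the polarizer `H = {x : ⟪x,h⟫ < a}`. -/
def polSet {d : ℕ} (h : Euc d) (a : ℝ) (Ω : Set (Euc d)) : Set (Euc d) :=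
  ((Ω ∪ reflH h a '' Ω) ∩ halfSpace h a) ∪ (Ω ∩ reflH h a '' Ω)

/-- Dual polarization of a set. -/
def polSetDual {d : ℕ} (h : Euc d) (a : ℝ) (Ω : Set (Euc d)) : Set (Euc d) :=
  ((Ω ∪ reflH h a '' Ω) ∩ (halfSpace h a)ᶜ) ∪ (Ω ∩ reflH h a '' Ω)

/-- Polarization of a function. -/
def polFun {d : ℕ} (h : Euc d) (a : ℝ) (u : Euc d → ℝ) (x : Euc d) : ℝ :=
  if (inner ℝ x h : ℝ) < a then max (u x) (u (reflH h a x)) else min (u x) (u (reflH h a x))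

/-- The `p`-th power of the Gagliardo seminorm `[u]_{s,p}^p`. -/
def gagP (d : ℕ) (s p : ℝ) (u : Euc d → ℝ) : ℝ≥0∞ :=
  ∫⁻ z : Euc d × Euc d, ENNReal.ofReal (|u z.1 - u z.2| ^ p / dist z.1 z.2 ^ ((d : ℝ) + s * p))

/-- Membership in the fractional Sobolev space `W^{s,p}_0(Ω)`. -/
def memW0 (d : ℕ) (s p : ℝ) (Ω : Set (Euc d)) (u : Euc d → ℝ) : Prop :=
  MemLp u (ENNReal.ofReal p) (volume : Measure (Euc d)) ∧
  gagP d s p u < ⊤ ∧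
  ∀ᵐ x : Euc d, x ∉ Ω → u x = 0

/-- The first `q`-eigenvalue `λ^s_{p,q}(Ω) = inf {[u]_{s,p}^p : u ∈ W^{s,p}_0(Ω), ‖u‖_{L^q(Ω)} = 1}`. -/
def lamSPQ (d : ℕ) (s p q : ℝ) (Ω : Set (Euc d)) : ℝ≥0∞ :=
  sInf { l : ℝ≥0∞ | ∃ u : Euc d → ℝ, memW0 d s p Ω u ∧
    (∫⁻ x in Ω, ENNReal.ofReal (|u x| ^ q)) = 1 ∧ l = gagP d s p u }

/-- `q ∈ [1, p*_s)` where `p*_s = dp/(d - sp)` if `sp < d` and `p*_s = ∞` otherwise. -/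
def subcritical (d : ℕ) (s p q : ℝ) : Prop :=
  1 ≤ q ∧ (s * p < (d : ℝ) → q < ((d : ℝ) * p) / ((d : ℝ) - s * p))

/-- The first standard basis vector `e₁` of `ℝ^d`. -/
def e1Vec (d : ℕ) : Euc d :=
  (EuclideanSpace.equiv (Fin d) ℝ).symm (fun i => if (i : ℕ) = 0 then 1 else 0)

/-- The annular domain `Ω_t = B_R(0) \ cl(B_r(t e₁))`. -/
def annulus (d : ℕ) (r R t : ℝ) : Set (Euc d) :=
  ball (0 : Euc d) R \ closure (ball (t • e1Vec d) r)

/-- `Ω` has a boundary of class `C^{1,1}`: near each boundary point, `Ω` is (in suitable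
coordinates) the region below the graph of a `C^1` function with Lipschitz derivative,
and the boundary is the graph. -/
def HasC11Boundary {d : ℕ} (Ω : Set (Euc d)) : Prop :=
  ∀ x ∈ frontier Ω, ∃ (ν : Euc d) (r : ℝ) (f : Euc d → ℝ) (K : NNReal),
    ‖ν‖ = 1 ∧ 0 < r ∧ ContDiff ℝ 1 f ∧ LipschitzWith K (fderiv ℝ f) ∧
    ∀ y ∈ ball x r,
      (y ∈ Ω ↔ (inner ℝ y ν : ℝ) < f (y - ((inner ℝ y ν : ℝ)) • ν)) ∧
      (y ∈ frontier Ω ↔ (inner ℝ y ν : ℝ) = f (y - ((inner ℝ y ν : ℝ)) • ν))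

/-- `G(t) = |t|^{p-2} t`. -/
def Gp (p t : ℝ) : ℝ := |t| ^ (p - 2) * t

/-- Steiner symmetry with respect to the hyperplane `{x₁ = 0}`, characterized via
polarizations by half-spaces `H_a = {x : x₁ < a}`. -/
def SteinerSymmE1 (d : ℕ) (A : Set (Euc d)) : Prop :=
  (∀ a : ℝ, 0 ≤ a → polSet (e1Vec d) a A = A) ∧
  (∀ a : ℝ, a ≤ 0 → polSetDual (e1Vec d) a A = A)

/-- Foliated Schwarz symmetry with respect to the ray `c + ℝ⁺ η`, characterized via
polarizations by half-spaces containing the ray with `c` on the boundary hyperplane. -/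
def FoliatedSchwarzSymm (d : ℕ) (c η : Euc d) (A : Set (Euc d)) : Prop :=
  ∀ (h : Euc d) (b : ℝ), ‖h‖ = 1 →
    (∀ t : ℝ, 0 < t → c + t • η ∈ halfSpace h b) → (inner ℝ c h : ℝ) = b →
    polSet h b A = A

/-- The simple rotation with plane of rotation `span{η, ξ}` and angle `θ`, fixing the
orthogonal complement of the plane pointwise. -/
def rotMap (d : ℕ) (η ξ : Euc d) (θ : ℝ) (x : Euc d) : Euc d :=
  x - (inner ℝ x η : ℝ) • η - (inner ℝ x ξ : ℝ) • ξ
    + (Real.cos θ * (inner ℝ x η : ℝ) - Real.sin θ * (inner ℝ x ξ : ℝ)) • η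
    + (Real.sin θ * (inner ℝ x η : ℝ) + Real.cos θ * (inner ℝ x ξ : ℝ)) • ξ

/-! The reflection `σ_a` satisfies `|σ_a x - y|² = |x - y|² + 4 (x₁ - a) (y₁ - a)`: it moves
a point away from the points on its own side of `∂H_a` and towards those on the other side.
For `a ≥ 0` the origin lies in `cl H_a`, so `B_R(0)` is never left by pulling points into `H_a`.
For `a ≤ t` the hole's centre `t e₁` lies outside `H_a`, so `Ω_t` is already polarized. For
`a ≥ t` the centre lies in `cl H_a` and polarization replaces the hole by its mirror image,
centred at `(2a - t) e₁`; the bound `2a - t < R - r` is what keeps the mirrored hole inside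
`B_R(0)`, so that points of `H_a` inside the old hole have their mirror images in `Ω_t`. -/

section Reflection

variable {d : ℕ} {e : Euc d} {a : ℝ}

lemma inner_smul_left_self (he : ‖e‖ = 1) (c : ℝ) : (inner ℝ (c • e) e : ℝ) = c := by
  rw [real_inner_smul_left, real_inner_self_eq_norm_sq, he, one_pow, mul_one]

lemma inner_reflH (he : ‖e‖ = 1) (x : Euc d) :
    (inner ℝ (reflH e a x) e : ℝ) = 2 * a - inner ℝ x e := by
  simp only [reflH, inner_sub_left, real_inner_smul_left, real_inner_self_eq_norm_sq, he]
  ring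

lemma reflH_involutive (he : ‖e‖ = 1) : Function.Involutive (reflH e a) := fun x => by
  rw [reflH, inner_reflH he, reflH]
  module

lemma reflH_smul_self (he : ‖e‖ = 1) (c : ℝ) : reflH e a (c • e) = (2 * a - c) • e := by
  rw [reflH, inner_smul_left_self he]
  module

lemma dist_reflH_sq (he : ‖e‖ = 1) (x y : Euc d) :
    dist (reflH e a x) y ^ 2 =
      dist x y ^ 2 + 4 * ((inner ℝ x e : ℝ) - a) * ((inner ℝ y e : ℝ) - a) := by
  have hee : (inner ℝ e e : ℝ) = 1 := by rw [real_inner_self_eq_norm_sq, he, one_pow]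
  rw [dist_eq_norm, dist_eq_norm, ← real_inner_self_eq_norm_sq, ← real_inner_self_eq_norm_sq]
  simp only [reflH, inner_sub_left, inner_sub_right, real_inner_smul_left, real_inner_smul_right,
    hee, real_inner_comm x e, real_inner_comm y e]
  ring

lemma dist_reflH_comm (he : ‖e‖ = 1) (x y : Euc d) :
    dist (reflH e a x) y = dist x (reflH e a y) := by
  rw [← sq_eq_sq₀ dist_nonneg dist_nonneg, dist_comm x, dist_reflH_sq he, dist_reflH_sq he,
    dist_comm]
  ring

lemma dist_le_dist_reflH (he : ‖e‖ = 1) {x y : Euc d}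
    (h : 0 ≤ ((inner ℝ x e : ℝ) - a) * ((inner ℝ y e : ℝ) - a)) :
    dist x y ≤ dist (reflH e a x) y := by
  rw [← sq_le_sq₀ dist_nonneg dist_nonneg, dist_reflH_sq he]
  linarith

lemma dist_reflH_le_dist (he : ‖e‖ = 1) {x y : Euc d}
    (h : ((inner ℝ x e : ℝ) - a) * ((inner ℝ y e : ℝ) - a) ≤ 0) :
    dist (reflH e a x) y ≤ dist x y := by
  rw [← sq_le_sq₀ dist_nonneg dist_nonneg, dist_reflH_sq he]
  linarith

lemma norm_le_norm_reflH (he : ‖e‖ = 1) (ha : 0 ≤ a) {x : Euc d} (hx : (inner ℝ x e : ℝ) ≤ a) :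
    ‖x‖ ≤ ‖reflH e a x‖ := by
  simpa only [dist_zero_right] using
    dist_le_dist_reflH (y := 0) he (by rw [inner_zero_left]; nlinarith)

lemma norm_reflH_le_norm (he : ‖e‖ = 1) (ha : 0 ≤ a) {x : Euc d} (hx : a ≤ (inner ℝ x e : ℝ)) :
    ‖reflH e a x‖ ≤ ‖x‖ := by
  simpa only [dist_zero_right] using
    dist_reflH_le_dist (y := 0) he (by rw [inner_zero_left]; nlinarith)

end Reflection

section Polarization

variable {d : ℕ} {e : Euc d} {a : ℝ} {Ω : Set (Euc d)} {x : Euc d}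

lemma mem_polSet_of_lt (he : ‖e‖ = 1) (hx : (inner ℝ x e : ℝ) < a) :
    x ∈ polSet e a Ω ↔ x ∈ Ω ∨ reflH e a x ∈ Ω := by
  rw [polSet, (reflH_involutive he).image_eq_preimage_symm]
  simp only [halfSpace, mem_union, mem_inter_iff, mem_preimage, mem_ofPred_eq, hx]
  tauto

lemma mem_polSet_of_le (he : ‖e‖ = 1) (hx : a ≤ (inner ℝ x e : ℝ)) :
    x ∈ polSet e a Ω ↔ x ∈ Ω ∧ reflH e a x ∈ Ω := by
  rw [polSet, (reflH_involutive he).image_eq_preimage_symm]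
  simp only [halfSpace, mem_union, mem_inter_iff, mem_preimage, mem_ofPred_eq, not_lt.2 hx]
  tauto

lemma polSet_eq_self (he : ‖e‖ = 1)
    (h : ∀ x, (inner ℝ x e : ℝ) ≤ a → reflH e a x ∈ Ω → x ∈ Ω) : polSet e a Ω = Ω := by
  ext x
  rcases lt_or_ge (inner ℝ x e : ℝ) a with hx | hx
  · rw [mem_polSet_of_lt he hx]
    exact ⟨fun hx' => hx'.elim id (h x hx.le), Or.inl⟩
  · rw [mem_polSet_of_le he hx]
    refine ⟨And.left, fun hxΩ => ⟨hxΩ, h _ ?_ ?_⟩⟩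
    · rw [inner_reflH he]
      linarith
    · rwa [reflH_involutive he x]

end Polarization

lemma norm_e1Vec {d : ℕ} (hd : 0 < d) : ‖e1Vec d‖ = 1 := by
  have : e1Vec d = EuclideanSpace.single ⟨0, hd⟩ 1 := by
    ext i
    simp [e1Vec, Fin.ext_iff]
  rw [this, PiLp.norm_single, norm_one]

section Annulus

variable {d : ℕ} {r R : ℝ}

lemma mem_annulus (hr : 0 < r) {c : ℝ} {x : Euc d} :
    x ∈ annulus d r R c ↔ ‖x‖ < R ∧ r < dist x (c • e1Vec d) := by
  rw [annulus, closure_ball _ hr.ne', mem_sdiff, mem_ball_zero_iff, mem_closedBall, not_le]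

lemma reflH_mem_annulus (hd : 0 < d) (hr : 0 < r) {a c : ℝ} {x : Euc d} :
    reflH (e1Vec d) a x ∈ annulus d r R c ↔
      ‖reflH (e1Vec d) a x‖ < R ∧ r < dist x ((2 * a - c) • e1Vec d) := by
  rw [mem_annulus hr, dist_reflH_comm (norm_e1Vec hd), reflH_smul_self (norm_e1Vec hd)]

lemma polSet_annulus_of_le (hd : 0 < d) (hr : 0 < r) {t a : ℝ} (ha : 0 ≤ a) (hat : a ≤ t) :
    polSet (e1Vec d) a (annulus d r R t) = annulus d r R t := by
  have he := norm_e1Vec hd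
  refine polSet_eq_self he fun x hx hσx => ?_
  rw [mem_annulus hr] at hσx ⊢
  have hc : dist (reflH (e1Vec d) a x) (t • e1Vec d) ≤ dist x (t • e1Vec d) :=
    dist_reflH_le_dist he (by rw [inner_smul_left_self he]; nlinarith)
  exact ⟨(norm_le_norm_reflH he ha hx).trans_lt hσx.1, hσx.2.trans_le hc⟩

lemma polSet_annulus_of_ge (hd : 0 < d) (hr : 0 < r) {t a : ℝ} (ht : 0 ≤ t) (hta : t ≤ a)
    (haR : a < (R - r + t) / 2) :
    polSet (e1Vec d) a (annulus d r R t) = annulus d r R (2 * a - t) := by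
  have he := norm_e1Vec hd
  have ha : 0 ≤ a := ht.trans hta
  ext x
  rcases lt_or_ge (inner ℝ x (e1Vec d) : ℝ) a with hx | hx
  · have hc : dist x (t • e1Vec d) ≤ dist x ((2 * a - t) • e1Vec d) := by
      rw [← reflH_smul_self he, ← dist_reflH_comm he]
      exact dist_le_dist_reflH he (by rw [inner_smul_left_self he]; nlinarith)
    rw [mem_polSet_of_lt he hx, reflH_mem_annulus hd hr, mem_annulus hr, mem_annulus hr]
    constructor
    · rintro (⟨hxR, hxt⟩ | ⟨hσR, hσc⟩)
      exacts [⟨hxR, hxt.trans_le hc⟩, ⟨(norm_le_norm_reflH he ha hx.le).trans_lt hσR, hσc⟩]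
    rintro ⟨hxR, hxc⟩
    refine (lt_or_ge r (dist x (t • e1Vec d))).imp (fun hxt => ⟨hxR, hxt⟩) fun hxt => ⟨?_, hxc⟩
    calc ‖reflH (e1Vec d) a x‖
        ≤ dist (reflH (e1Vec d) a x) ((2 * a - t) • e1Vec d) + ‖(2 * a - t) • e1Vec d‖ :=
          norm_le_norm_add_norm_sub' _ _ |>.trans_eq (by rw [dist_eq_norm, add_comm])
      _ = dist x (t • e1Vec d) + (2 * a - t) := by
          rw [dist_reflH_comm he, reflH_smul_self he, show 2 * a - (2 * a - t) = t by ring,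
            norm_smul, he, Real.norm_of_nonneg (by linarith), mul_one]
      _ < R := by linarith
  · have hc : dist x ((2 * a - t) • e1Vec d) ≤ dist x (t • e1Vec d) := by
      rw [← reflH_smul_self he, ← dist_reflH_comm he]
      exact dist_reflH_le_dist he (by rw [inner_smul_left_self he]; nlinarith)
    rw [mem_polSet_of_le he hx, reflH_mem_annulus hd hr, mem_annulus hr, mem_annulus hr]
    exact ⟨fun ⟨⟨hxR, _⟩, _, hσc⟩ => ⟨hxR, hσc⟩,
      fun ⟨hxR, hxc⟩ => ⟨⟨hxR, hxc.trans_le hc⟩, (norm_reflH_le_norm he ha hx).trans_lt hxR, hxc⟩⟩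

end Annulus

theorem polSet_annulus_general (d : ℕ) (hd : 2 ≤ d) (r R t a : ℝ)
    (hr : 0 < r) (ht0 : 0 ≤ t) :
    (0 ≤ a → a ≤ t → polSet (e1Vec d) a (annulus d r R t) = annulus d r R t) ∧
    (t ≤ a → a < (R - r + t) / 2 →
      polSet (e1Vec d) a (annulus d r R t) = annulus d r R (2 * a - t)) :=
  ⟨polSet_annulus_of_le (by omega) hr, polSet_annulus_of_ge (by omega) hr ht0⟩

/-- **Polarization of annular domains.**
For `Ω_t = B_R(0) \ cl(B_r(t e₁))`: `P_a(Ω_t) = Ω_t` for `0 ≤ a ≤ t`, and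
`P_a(Ω_t) = Ω_{2a-t}` for `t ≤ a < (R - r + t)/2`. -/
theorem polSet_annulus (d : ℕ) (hd : 2 ≤ d) (r R t a : ℝ)
    (hr : 0 < r) (hrR : r < R) (ht0 : 0 ≤ t) (ht : t < R - r) :
    (0 ≤ a → a ≤ t → polSet (e1Vec d) a (annulus d r R t) = annulus d r R t) ∧
    (t ≤ a → a < (R - r + t) / 2 →
      polSet (e1Vec d) a (annulus d r R t) = annulus d r R (2 * a - t)) :=
  polSet_annulus_general d hd r R t a hr ht0
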